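/- arXiv:0708.2659 — 2 statements merged into one kernel-verified Lean document; each statement's English description precedes it below -/
import Mathlib

section
/- Let S be an ordered face structure and a, b faces of the same dimension with γ(a) ⊥^∼ γ(b). Then a and b are incomparable under <^∼ and incomparable under <^+. -/
/-!  Ordered face structures, following M. Zawadowski,
"On ordered face structures and many-to-one computads".

We encode the graded set of faces as `F : ℕ → Type`, where `F (k+1)` is the set
of faces of dimension `k`, and `F 0` is an empty type playing the role of
`S₋₁`.  The codomain of a face of dimension `k+1` is a face of dimension `k`,
and its domain `δ` is a set of elements of `F (k+1) ⊕ F k`, where `Sum.inl x`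
is a genuine face `x` and `Sum.inr u` stands for the empty face `1ᵤ` on `u`.
-/

structure PreOFS where
  F : ℕ → Type
  γ : ∀ {k : ℕ}, F (k + 2) → F (k + 1)
  δ : ∀ {k : ℕ}, F (k + 2) → Set (F (k + 1) ⊕ F k)
  sim : ∀ {k : ℕ}, F (k + 1) → F (k + 1) → Prop

namespace PreOFS

variable (S : PreOFS)

/-- The genuine (non-empty) faces in the domain of `a`. -/
def realDom {k : ℕ} (a : S.F (k + 2)) : Set (S.F (k + 1)) :=
  {x | Sum.inl x ∈ S.δ a}

/-- `a` has empty domain (`δ(a) = 1ᵤ`). -/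
def isEps {k : ℕ} (a : S.F (k + 2)) : Prop :=
  ∃ u, Sum.inr u ∈ S.δ a

/-- `a` is a loop (`δ(a) = γ(a)` as sets). -/
def isLoop {k : ℕ} (a : S.F (k + 2)) : Prop :=
  S.δ a = {Sum.inl (S.γ a)}

/-- Codomain of a generalized face (`γ(1ᵤ) = u`). -/
def cod {k : ℕ} : S.F (k + 2) ⊕ S.F (k + 1) → S.F (k + 1)
  | Sum.inl x => S.γ x
  | Sum.inr u => u

/-- Domain of a generalized face (`δ(1ᵤ) = u`). -/
def domM {k : ℕ} : S.F (k + 2) ⊕ S.F (k + 1) → Set (S.F (k + 1) ⊕ S.F k)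
  | Sum.inl x => S.δ x
  | Sum.inr u => {Sum.inl u}

/-- `δ̇⁻ᵞ(a)`: the non-loop genuine faces in the domain of `a`. -/
def nlDom {k : ℕ} (a : S.F (k + 3)) : Set (S.F (k + 2)) :=
  {x | Sum.inl x ∈ S.δ a ∧ ¬ S.isLoop x}

/-- The strict upper order `<⁺`. -/
def ltP {k : ℕ} : S.F (k + 1) → S.F (k + 1) → Prop :=
  Relation.TransGen
    (fun a b => ∃ α : S.F (k + 2), ¬ S.isLoop α ∧ Sum.inl a ∈ S.δ α ∧ S.γ α = b)

def leP {k : ℕ} (a b : S.F (k + 1)) : Prop := a = b ∨ S.ltP a b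

/-- Comparability under `<⁺`. -/
def perpP {k : ℕ} (a b : S.F (k + 1)) : Prop := S.ltP a b ∨ S.ltP b a

/-- Comparability under `<∼`. -/
def perpS {k : ℕ} (a b : S.F (k + 1)) : Prop := S.sim a b ∨ S.sim b a

/-- The lower relation `<⁻`. -/
def ltM {k : ℕ} : S.F (k + 2) → S.F (k + 2) → Prop :=
  Relation.TransGen (fun a b => Sum.inl (S.γ a) ∈ S.δ b)

/-- `θ(a) = δ(a) ∪ γ(a)` (with empty faces). -/
def thetaFull {k : ℕ} (a : S.F (k + 2)) : Set (S.F (k + 1) ⊕ S.F k) :=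
  insert (Sum.inl (S.γ a)) (S.δ a)

/-- `θ̇(a)`: the genuine faces in `δ(a) ∪ γ(a)`. -/
def thetaDot {k : ℕ} (a : S.F (k + 2)) : Set (S.F (k + 1)) :=
  insert (S.γ a) (S.realDom a)

/-- `ι(b)`: the internal faces of `b`. -/
def iota {k : ℕ} (b : S.F (k + 3)) : Set (S.F (k + 1)) :=
  {u | ∃ x ∈ S.nlDom b, ∃ y ∈ S.nlDom b, S.γ x = u ∧ u ∈ S.realDom y}

/-- `A ≡₁ B` : equality of sets of generalized faces modulo empty faces. -/
def eq1 {k : ℕ} (A B : Set (S.F (k + 2) ⊕ S.F (k + 1))) : Prop :=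
  {x : S.F (k + 2) | Sum.inl x ∈ A} = {x : S.F (k + 2) | Sum.inl x ∈ B} ∧
    ({u : S.F (k + 1) | Sum.inr u ∈ A} ∪
        ⋃ x ∈ {x : S.F (k + 2) | Sum.inl x ∈ A}, S.thetaDot x) =
      ({u : S.F (k + 1) | Sum.inr u ∈ B} ∪
        ⋃ x ∈ {x : S.F (k + 2) | Sum.inl x ∈ B}, S.thetaDot x)

end PreOFS

namespace PreOFS

/-- Iterated codomain, going down `j` dimensions. -/
def down (S : PreOFS) : ∀ (k j : ℕ), S.F (k + j + 1) → S.F (k + 1)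
  | _, 0, a => a
  | k, j + 1, a => down S k j (S.γ a)

/-- `γ⁽ˡ⁾` : iterated codomain down to dimension `l`. -/
def gIter (S : PreOFS) {k : ℕ} (l : ℕ) (h : l ≤ k) (a : S.F (k + 1)) : S.F (l + 1) :=
  down S l (k - l) (_root_.cast (congrArg S.F (by omega : k + 1 = l + (k - l) + 1)) a)

/-- The combined order `<^S`. -/
def ltS (S : PreOFS) {k : ℕ} (a b : S.F (k + 1)) : Prop :=
  S.ltP a b ∨ ∃ l : ℕ, ∃ h : l ≤ k, S.sim (S.gIter l h a) (S.gIter l h b)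

end PreOFS

/-- The axioms of an ordered face structure. -/
structure IsOFS (S : PreOFS) : Prop where
  empty_bot : IsEmpty (S.F 0)
  fin : ∀ k, Finite (S.F k)
  bdd : ∃ n, ∀ k, n < k → IsEmpty (S.F k)
  nonempty₀ : Nonempty (S.F 1)
  dom_nonempty : ∀ {k : ℕ} (a : S.F (k + 2)), (S.δ a).Nonempty
  dom_eps : ∀ {k : ℕ} (a : S.F (k + 2)) (u : S.F k),
    Sum.inr u ∈ S.δ a → S.δ a = {Sum.inr u}
  dom_dim1 : ∀ a : S.F 2, ∃ x, S.δ a = {Sum.inl x}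
  glob_γ : ∀ {k : ℕ} (a : S.F (k + 3)),
    ({S.γ (S.γ a)} : Set (S.F (k + 1))) =
      {y | ∃ e ∈ S.δ a, S.cod e = y} \ (⋃ x ∈ S.nlDom a, S.realDom x)
  glob_δ_low : ∀ a : S.F 3,
    S.realDom (S.γ a) =
      (⋃ e ∈ S.δ a, {x : S.F 1 | Sum.inl x ∈ S.domM e}) \
        {y : S.F 1 | ∃ x ∈ S.nlDom a, S.γ x = y}
  glob_δ : ∀ {k : ℕ} (a : S.F (k + 4)),
    S.eq1 (S.δ (S.γ a))
      ((⋃ e ∈ S.δ a, S.domM e) \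
        {e : S.F (k + 2) ⊕ S.F (k + 1) | ∃ x ∈ S.nlDom a, Sum.inl (S.γ x) = e})
  local_disc : ∀ {k : ℕ} (a : S.F (k + 2)) (x y : S.F (k + 1)),
    Sum.inl x ∈ S.δ a → Sum.inl y ∈ S.δ a → ¬ S.ltP x y
  strictP : ∀ {k : ℕ} (x : S.F (k + 1)), ¬ S.ltP x x
  linearP₀ : ∀ x y : S.F 1, x = y ∨ S.ltP x y ∨ S.ltP y x
  sim_irrefl : ∀ {k : ℕ} (x : S.F (k + 1)), ¬ S.sim x x
  sim_trans : ∀ {k : ℕ} (x y z : S.F (k + 1)), S.sim x y → S.sim y z → S.sim x z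
  disj : ∀ {k : ℕ} (x y : S.F (k + 1)), S.perpS x y → ¬ S.perpP x y
  sim_lt_minus : ∀ {k : ℕ} (a b : S.F (k + 2)), S.sim a b → S.ltM a b
  sim_dim0 : ∀ x y : S.F 1, ¬ S.sim x y
  disj_theta : ∀ {k : ℕ} (a b : S.F (k + 2)),
    S.thetaFull a ∩ S.thetaFull b = ∅ → (S.sim a b ↔ S.ltM a b)
  pencil₁ : ∀ {k : ℕ} (a b : S.F (k + 2)), a ≠ b →
    (S.thetaDot a ∩ S.thetaDot b).Nonempty → S.perpS a b ∨ S.perpP a b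
  pencil₂ : ∀ {k : ℕ} (a b : S.F (k + 3)), S.isEps a →
    S.γ (S.γ a) ∈ S.iota b → S.sim a b ∨ S.ltP a b
  loop_fill : ∀ {k : ℕ} (x : S.F (k + 2)), S.isLoop x →
    ∃ α : S.F (k + 3), ¬ S.isLoop α ∧ S.γ α = x

/-! If `a <⁺ b` or `a <∼ b` then `γ(a) ≤⁺ γ(b)`: for `<⁺` by globularity of the domains, for `<∼`
because it refines `<⁻`. Disjointness of `⊥∼` and `⊥⁺`, together with irreflexivity of `<∼`,
rules out `γ(a) ≤⁺ γ(b)` whenever `γ(a) ⊥∼ γ(b)`. -/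

namespace PreOFS

variable {S : PreOFS} {k : ℕ}

theorem leP.trans {x y z : S.F (k + 1)} (hxy : S.leP x y) (hyz : S.leP y z) : S.leP x z := by
  rcases hxy with rfl | hxy
  · exact hyz
  · rcases hyz with rfl | hyz
    · exact .inr hxy
    · exact .inr (hxy.trans hyz)

theorem leP_γ_of_ltM {a b : S.F (k + 2)} (h : S.ltM a b) : S.leP (S.γ a) (S.γ b) := by
  have step : ∀ {a b : S.F (k + 2)}, Sum.inl (S.γ a) ∈ S.δ b → S.leP (S.γ a) (S.γ b) := by
    intro a b hab
    by_cases hb : S.isLoop b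
    · rw [hb, Set.mem_singleton_iff] at hab
      exact .inl (Sum.inl.inj hab)
    · exact .inr (.single ⟨b, hb, hab, rfl⟩)
  induction h with
  | single hab => exact step hab
  | tail _ hbc ih => exact ih.trans (step hbc)

end PreOFS

namespace IsOFS

open PreOFS

variable {S : PreOFS} (hS : IsOFS S) {k : ℕ}
include hS

theorem wellFounded_flip_ltP : WellFounded (flip (S.ltP (k := k))) := by
  have := hS.fin (k + 1)
  have : IsTrans (S.F (k + 1)) (flip S.ltP) := ⟨fun _ _ _ hab hbc => hbc.trans hab⟩
  have : Std.Irrefl (flip (S.ltP (k := k))) := ⟨hS.strictP⟩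
  exact Finite.wellFounded_of_trans_of_irrefl _

/-- By globularity, every codomain of a face of `δ(α)` other than `γγ(α)` lies in the domain of a
non-loop face of `δ(α)`, hence strictly below that face's codomain; since `<⁺` is finite, climbing
this way ends at `γγ(α)`. -/
theorem leP_cod_of_mem_δ {α : S.F (k + 3)} {e : S.F (k + 2) ⊕ S.F (k + 1)} (he : e ∈ S.δ α) :
    S.leP (S.cod e) (S.γ (S.γ α)) := by
  suffices ∀ y, (∃ e ∈ S.δ α, S.cod e = y) → S.leP y (S.γ (S.γ α)) from this _ ⟨e, he, rfl⟩
  intro y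
  induction y using hS.wellFounded_flip_ltP.induction with
  | _ y ih =>
  intro hy
  by_cases hinner : y ∈ ⋃ x ∈ S.nlDom α, S.realDom x
  · obtain ⟨x, hx, hyx⟩ : ∃ x ∈ S.nlDom α, y ∈ S.realDom x := by simpa using hinner
    have hlt : S.ltP y (S.γ x) := .single ⟨x, hx.2, hyx, rfl⟩
    exact leP.trans (.inr hlt) (ih _ hlt ⟨.inl x, hx.1, rfl⟩)
  · have hγγ : y ∈ ({S.γ (S.γ α)} : Set _) := hS.glob_γ α ▸ ⟨hy, hinner⟩
    exact .inl hγγ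

theorem leP_γ_of_ltP {a b : S.F (k + 2)} (h : S.ltP a b) : S.leP (S.γ a) (S.γ b) := by
  have step : ∀ {a b : S.F (k + 2)},
      (∃ α, ¬ S.isLoop α ∧ Sum.inl a ∈ S.δ α ∧ S.γ α = b) → S.leP (S.γ a) (S.γ b) := by
    rintro a _ ⟨α, -, ha, rfl⟩
    exact hS.leP_cod_of_mem_δ ha
  induction h with
  | single hab => exact step hab
  | tail _ hbc ih => exact ih.trans (step hbc)

theorem leP_γ_of_sim {a b : S.F (k + 2)} (h : S.sim a b) : S.leP (S.γ a) (S.γ b) :=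
  leP_γ_of_ltM (hS.sim_lt_minus a b h)

theorem not_leP_of_perpS {x y : S.F (k + 1)} (h : S.perpS x y) : ¬ S.leP x y := by
  rintro (rfl | hlt)
  · rcases h with h | h <;> exact hS.sim_irrefl _ h
  · exact hS.disj x y h (.inl hlt)

end IsOFS

/-- if `γ(a) ⊥∼ γ(b)` then `a` and `b` are incomparable under
`<∼` and incomparable under `<⁺`. -/
theorem stmt12 (S : PreOFS) (hS : IsOFS S) {k : ℕ} (a b : S.F (k + 2))
    (h : S.perpS (S.γ a) (S.γ b)) : ¬ S.perpS a b ∧ ¬ S.perpP a b := by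
  constructor
  · rintro (hab | hba)
    · exact hS.not_leP_of_perpS h (hS.leP_γ_of_sim hab)
    · exact hS.not_leP_of_perpS h.symm (hS.leP_γ_of_sim hba)
  · rintro (hab | hba)
    · exact hS.not_leP_of_perpS h (hS.leP_γ_of_ltP hab)
    · exact hS.not_leP_of_perpS h.symm (hS.leP_γ_of_ltP hba)
end

section
/- Every monotone endomorphism of an ordered face structure is the identity. -/
/-- A monotone morphism of ordered face structures: it commutes with `γ`,
restricts to a bijection between the (genuine) domains, preserves empty
domains, and preserves the order `<∼`. -/
structure IsOFSHom (S T : PreOFS) (f : ∀ k, S.F k → T.F k) : Prop where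
  map_γ : ∀ {k : ℕ} (a : S.F (k + 2)), f (k + 1) (S.γ a) = T.γ (f (k + 2) a)
  map_eps : ∀ {k : ℕ} (a : S.F (k + 2)) (u : S.F k),
    Sum.inr u ∈ S.δ a → T.δ (f (k + 2) a) = {Sum.inr (f k u)}
  map_dom : ∀ {k : ℕ} (a : S.F (k + 2)),
    Set.BijOn (f (k + 1)) (S.realDom a) (T.realDom (f (k + 2) a))
  map_sim : ∀ {k : ℕ} (x y : S.F (k + 1)), S.sim x y → T.sim (f (k + 1) x) (f (k + 1) y)

/-!
Since `f` preserves `<∼`, a strict order on the finite set of faces of each dimension, no face is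
`<∼`-comparable with its image; so by `pencil₁` a moved face whose codomain is fixed is
`<⁺`-comparable with its image. A face `x` with `x <⁺ f x` yields such a face one dimension higher:
`f` is `≤⁺`-monotone, so the orbit of `x` climbs to a fixed point `L = f d` with `d <⁺ L`, and the
last generating edge `α : e → L` of `d <⁺ L` is collapsed by `f`. Thus `f α` is a loop while `α` is
not, and the two share the face `L` (symmetrically when `f x <⁺ x`). Faces being bounded in
dimension, no face is `<⁺`-comparable with its image, and induction on dimension, starting from the
linear order `<⁺` on `S₀`, shows that `f` fixes every face.
-/

open Function Relation Set

section StrictOrder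

variable {α : Type*} [Finite α] {r : α → α → Prop} [IsStrictOrder α r]

theorem not_forall_rel_succ_of_finite (u : ℕ → α) : ¬ ∀ n, r (u n) (u (n + 1)) :=
  fun h => not_injective_infinite_finite u (RelEmbedding.natLT u h).injective

theorem not_rel_apply_of_map_rel {g : α → α} (hg : ∀ a b, r a b → r (g a) (g b)) (x : α) :
    ¬ r x (g x) := by
  intro hx
  refine not_forall_rel_succ_of_finite (r := r) (fun n => g^[n] x) fun n => ?_
  induction n with
  | zero => exact hx
  | succ n ih => simpa only [iterate_succ_apply'] using hg _ _ ih

theorem exists_rel_apply_apply_eq {g : α → α} (hg : ∀ a b, r a b → g a = g b ∨ r (g a) (g b))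
    {x : α} (hx : r x (g x)) : ∃ d, r d (g d) ∧ g (g d) = g d := by
  by_contra! hmoves
  refine not_forall_rel_succ_of_finite (r := r) (fun n => g^[n] x) fun n => ?_
  induction n with
  | zero => exact hx
  | succ n ih =>
    simp only [iterate_succ_apply'] at ih ⊢
    exact (hg _ _ ih).resolve_left (hmoves _ ih).symm

end StrictOrder

namespace PreOFS

variable {S : PreOFS} {k : ℕ}

theorem leP_trans {a b c : S.F (k + 1)} (hab : S.leP a b) (hbc : S.leP b c) : S.leP a c := by
  rcases hab with rfl | hab
  · exact hbc
  rcases hbc with rfl | hbc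
  · exact Or.inr hab
  · exact Or.inr (hab.trans hbc)

theorem leP_γ_of_mem_realDom {β : S.F (k + 2)} {x : S.F (k + 1)} (hx : x ∈ S.realDom β) :
    S.leP x (S.γ β) := by
  by_cases hβ : S.isLoop β
  · have hx' : Sum.inl x ∈ S.δ β := hx
    rw [hβ, mem_singleton_iff, Sum.inl.injEq] at hx'
    exact Or.inl hx'
  · exact Or.inr (TransGen.single ⟨β, hβ, hx, rfl⟩)

end PreOFS

namespace IsOFS

variable {S : PreOFS}

theorem isStrictOrder_ltP (hS : IsOFS S) (k : ℕ) : IsStrictOrder (S.F (k + 1)) S.ltP where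
  irrefl := hS.strictP
  trans _ _ _ := TransGen.trans

theorem isStrictOrder_sim (hS : IsOFS S) (k : ℕ) : IsStrictOrder (S.F (k + 1)) S.sim where
  irrefl := hS.sim_irrefl
  trans := hS.sim_trans

theorem leP_antisymm (hS : IsOFS S) {k : ℕ} {a b : S.F (k + 1)} (hab : S.leP a b)
    (hba : S.leP b a) : a = b := by
  rcases hab with rfl | hab
  · rfl
  rcases hba with rfl | hba
  · rfl
  exact absurd (hab.trans hba) (hS.strictP a)

end IsOFS

namespace IsOFSHom

section

variable {S T : PreOFS} {f : ∀ k, S.F k → T.F k} {k : ℕ}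

theorem leP_map_of_ltP (hf : IsOFSHom S T f) {a b : S.F (k + 1)} (h : S.ltP a b) :
    T.leP (f (k + 1) a) (f (k + 1) b) := by
  have map_step : ∀ {a b : S.F (k + 1)},
      (∃ α, ¬ S.isLoop α ∧ Sum.inl a ∈ S.δ α ∧ S.γ α = b) → T.leP (f (k + 1) a) (f (k + 1) b) := by
    rintro a b ⟨α, -, ha, rfl⟩
    rw [hf.map_γ]
    exact PreOFS.leP_γ_of_mem_realDom ((hf.map_dom α).mapsTo ha)
  induction h with
  | single hab => exact map_step hab
  | tail _ hbc ih => exact PreOFS.leP_trans ih (map_step hbc)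

theorem leP_map (hf : IsOFSHom S T f) {a b : S.F (k + 1)} (h : S.leP a b) :
    T.leP (f (k + 1) a) (f (k + 1) b) := by
  rcases h with rfl | h
  · exact Or.inl rfl
  · exact hf.leP_map_of_ltP h

theorem apply_eq_of_leP_of_leP (hf : IsOFSHom S T f) (hT : IsOFS T) {a e b : S.F (k + 1)}
    (hae : S.leP a e) (heb : S.leP e b) (hab : f (k + 1) a = f (k + 1) b) :
    f (k + 1) e = f (k + 1) a :=
  hT.leP_antisymm (hab ▸ hf.leP_map heb) (hf.leP_map hae)

theorem isLoop_map_of_apply_eq_apply_γ (hf : IsOFSHom S T f) (hT : IsOFS T) {α : S.F (k + 2)}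
    {p : S.F (k + 1)} (hp : p ∈ S.realDom α) (hpα : f (k + 1) p = f (k + 1) (S.γ α)) :
    T.isLoop (f (k + 2) α) := by
  by_contra hα
  refine hT.strictP (f (k + 1) p) (TransGen.single ⟨f (k + 2) α, hα, ?_, ?_⟩)
  · exact (hf.map_dom α).mapsTo hp
  · rw [← hf.map_γ, hpα]

end

section Endomorphism

variable {S : PreOFS} {f : ∀ k, S.F k → S.F k} {k : ℕ}

theorem not_perpS_apply (hf : IsOFSHom S S f) (hS : IsOFS S) (x : S.F (k + 1)) :
    ¬ S.perpS x (f (k + 1) x) := by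
  have := hS.isStrictOrder_sim k
  have := hS.fin (k + 1)
  rintro (h | h)
  · exact not_rel_apply_of_map_rel hf.map_sim x h
  · exact not_rel_apply_of_map_rel (r := swap S.sim) (fun a b h => hf.map_sim b a h) x h

theorem perpP_apply_of_thetaDot_inter (hf : IsOFSHom S S f) (hS : IsOFS S) {a : S.F (k + 2)}
    (hne : f (k + 2) a ≠ a) (hcom : (S.thetaDot a ∩ S.thetaDot (f (k + 2) a)).Nonempty) :
    S.perpP a (f (k + 2) a) :=
  (hS.pencil₁ a _ hne.symm hcom).resolve_left (hf.not_perpS_apply hS a)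

theorem perpP_apply_of_apply_eq_apply_γ (hf : IsOFSHom S S f) (hS : IsOFS S) {α : S.F (k + 2)}
    {p : S.F (k + 1)} (hα : ¬ S.isLoop α) (hp : p ∈ S.realDom α)
    (hpα : f (k + 1) p = f (k + 1) (S.γ α)) (hmem : f (k + 1) (S.γ α) ∈ S.thetaDot α) :
    S.perpP α (f (k + 2) α) := by
  have hloop := hf.isLoop_map_of_apply_eq_apply_γ hS hp hpα
  refine hf.perpP_apply_of_thetaDot_inter hS (fun h => hα (h ▸ hloop)) ⟨_, hmem, ?_⟩
  rw [hf.map_γ]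
  exact mem_insert _ _

theorem exists_perpP_apply_succ (hf : IsOFSHom S S f) (hS : IsOFS S)
    (h : ∃ x : S.F (k + 1), S.perpP x (f (k + 1) x)) :
    ∃ α : S.F (k + 2), S.perpP α (f (k + 2) α) := by
  have := hS.isStrictOrder_ltP k
  have := hS.fin (k + 1)
  have hmono : ∀ a b : S.F (k + 1), S.ltP a b → f (k + 1) a = f (k + 1) b ∨ S.ltP _ _ :=
    fun _ _ => hf.leP_map_of_ltP
  obtain ⟨x, hx | hx⟩ := h
  · obtain ⟨d, hd, hfix⟩ := exists_rel_apply_apply_eq hmono hx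
    obtain ⟨e, hde, α, hα, he, hγ⟩ := TransGen.tail'_iff.mp hd
    have hfγ : f (k + 1) (S.γ α) = f (k + 1) d := by rw [hγ, hfix]
    have hfe : f (k + 1) e = f (k + 1) d :=
      hf.apply_eq_of_leP_of_leP hS ((reflTransGen_iff_eq_or_transGen.mp hde).imp_left Eq.symm)
        (PreOFS.leP_γ_of_mem_realDom he) hfγ.symm
    refine ⟨α, hf.perpP_apply_of_apply_eq_apply_γ hS hα he (hfe.trans hfγ.symm) ?_⟩
    rw [hfγ, ← hγ]
    exact mem_insert _ _
  · obtain ⟨d, hd, hfix⟩ := exists_rel_apply_apply_eq (r := swap S.ltP)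
      (fun a b hab => (hmono b a hab).imp_left Eq.symm) hx
    obtain ⟨e, ⟨α, hα, hd', rfl⟩, hed⟩ := TransGen.head'_iff.mp hd
    have hfe : f (k + 1) (S.γ α) = f (k + 1) d :=
      (hf.apply_eq_of_leP_of_leP hS (PreOFS.leP_γ_of_mem_realDom hd')
        ((reflTransGen_iff_eq_or_transGen.mp hed).imp_left Eq.symm) hfix).trans hfix
    refine ⟨α, hf.perpP_apply_of_apply_eq_apply_γ hS hα hd' (hfix.trans hfe.symm) ?_⟩
    rw [hfe]
    exact mem_insert_of_mem _ hd'

theorem not_perpP_apply (hf : IsOFSHom S S f) (hS : IsOFS S) (k : ℕ) (x : S.F (k + 1)) :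
    ¬ S.perpP x (f (k + 1) x) := by
  intro hx
  have hperp : ∀ j, ∃ y : S.F (k + j + 1), S.perpP y (f (k + j + 1) y) := by
    intro j
    induction j with
    | zero => exact ⟨x, hx⟩
    | succ j ih => exact hf.exists_perpP_apply_succ hS ih
  obtain ⟨n, hn⟩ := hS.bdd
  obtain ⟨y, -⟩ := hperp (n + 1)
  exact (hn _ (by omega)).false y

theorem apply_eq_self_succ (hf : IsOFSHom S S f) (hS : IsOFS S) (k : ℕ) (x : S.F (k + 1)) :
    f (k + 1) x = x := by
  induction k with
  | zero => exact ((hS.linearP₀ x _).resolve_right (hf.not_perpP_apply hS 0 x)).symm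
  | succ k ih =>
    by_contra hne
    refine hf.not_perpP_apply hS (k + 1) x
      (hf.perpP_apply_of_thetaDot_inter hS hne ⟨S.γ x, mem_insert _ _, ?_⟩)
    rw [← ih (S.γ x), hf.map_γ]
    exact mem_insert _ _

end Endomorphism

end IsOFSHom

/-- every monotone endomorphism of an ordered face structure is
the identity. -/
theorem stmt15 (S : PreOFS) (hS : IsOFS S) (f : ∀ k, S.F k → S.F k)
    (hf : IsOFSHom S S f) : ∀ (k : ℕ) (x : S.F k), f k x = x := by
  rintro (_ | k) x
  · exact (hS.empty_bot.false x).elim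
  · exact hf.apply_eq_self_succ hS k x
end
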